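/- Let E be an n×n matrix of nonnegative integers with det E ≠ 0 and set d = |det E|. Then Σ_{J good for E^T, 0 < |J| < n} (−1)^{|J|−1} · d / |G_{E^T}^J| + (−1)^{n−1} · d − 1 = (−1)^n · ( Σ_{I good for E, 0 < |I| < n} (−1)^{|I|−1} · |G_E^I| + (−1)^{n−1} − d ). Here G_E^I = {λ ∈ G_E : λ_j = 1 for all j ∈ I} and G_{E^T}^J = {μ ∈ G_{E^T} : μ_j = 1 for all j ∈ J}. -/

import Mathlib

open Finset

variable {n : ℕ}

/-- The diagonal symmetry group `G_E` of the invertible polynomial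
`f(x) = ∑ i, ∏ j, x_j ^ E i j`, realized as the subgroup of `(ℂ*)^n` of
diagonal transformations `λ` with `∏ j, λ_j ^ E i j = 1` for all `i`. -/
def symGroup (E : Matrix (Fin n) (Fin n) ℕ) : Subgroup (Fin n → ℂˣ) where
  carrier := {l | ∀ i, ∏ j, l j ^ E i j = 1}
  one_mem' := by intro i; simp
  mul_mem' := by
    intro a b ha hb i
    simp only [Pi.mul_apply, mul_pow, Finset.prod_mul_distrib, ha i, hb i, mul_one]
  inv_mem' := by
    intro a ha i
    simp only [Pi.inv_apply, inv_pow, Finset.prod_inv_distrib, ha i, inv_one]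


open Classical in
/-- For a subset `I ⊆ {1,…,n}` of columns, `rowSet E I = A(I)` is the set of rows of `E`
supported in the columns `I`, i.e. `{i : E i j = 0 for all j ∉ I}`. -/
noncomputable def rowSet (E : Matrix (Fin n) (Fin n) ℕ) (I : Finset (Fin n)) : Finset (Fin n) :=
  Finset.univ.filter fun i => ∀ j, j ∉ I → E i j = 0

/-- The subgroup of `(ℂ*)^n` of elements `λ` with `λ_j = 1` for all `j ∈ I`. -/
def fixedSub (I : Finset (Fin n)) : Subgroup (Fin n → ℂˣ) where
  carrier := {l | ∀ j ∈ I, l j = 1}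
  one_mem' := by intro j hj; rfl
  mul_mem' := by intro a b ha hb j hj; simp [Pi.mul_apply, ha j hj, hb j hj]
  inv_mem' := by intro a ha j hj; simp [Pi.inv_apply, ha j hj]

/-- The isotropy subgroup `G_E^I = {λ ∈ G_E : λ_j = 1 for all j ∈ I}` of the points of
the coordinate torus `(ℂ*)^{Iᶜ}` under the diagonal `G_E`-action. -/
def isotropy (E : Matrix (Fin n) (Fin n) ℕ) (I : Finset (Fin n)) :
    Subgroup (Fin n → ℂˣ) :=
  symGroup E ⊓ fixedSub I

/-!
For a good `I` the rows `A(I)` of `E` are supported in the columns `I`, so after permuting rows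
`E` is block lower triangular with square diagonal blocks `B₁ = E[A(I), I]` and
`B₂ = E[A(I)ᶜ, Iᶜ]`, and `|det E| = |det B₁| · |det B₂|`. The group `G_E^I` is the solution set
of the monomial system `∏ⱼ λⱼ ^ B₂ᵢⱼ = 1`, and `G_{Eᵀ}^{A(I)ᶜ}` that of `B₁ᵀ`. The solutions of
`∏ⱼ λⱼ ^ Bᵢⱼ = 1` are the `ℂˣ`-valued characters of `ℤᵐ / ℤᵐB`, a finite abelian group of order
`|det B|`, so `|G_E^I| · |G_{Eᵀ}^{A(I)ᶜ}| = d`. Nonsingularity of `E` also forces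
`A_{Eᵀ}(A(I)ᶜ) = Iᶜ`, so `I ↦ A(I)ᶜ` is a bijection from the good sets of `E` onto those of `Eᵀ`
with `|A(I)ᶜ| = n - |I|`. The `J`-sum is therefore `(-1)ⁿ` times the `I`-sum, and the remaining
terms agree by sign bookkeeping.
-/

open Matrix

section MonomialMap

variable {ι κ κ' G : Type*} [Fintype ι] [CommGroup G]

def monomialHom (M : Matrix κ ι ℤ) : (ι → G) →* (κ → G) where
  toFun l i := ∏ j, l j ^ M i j
  map_one' := by ext; simp
  map_mul' l l' := by ext; simp [mul_zpow, prod_mul_distrib]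

lemma mem_ker_monomialHom {M : Matrix κ ι ℤ} {l : ι → G} :
    l ∈ (monomialHom M).ker ↔ ∀ i, ∏ j, l j ^ M i j = 1 := by
  simp [MonoidHom.mem_ker, funext_iff, monomialHom]

lemma ker_monomialHom_submatrix_equiv (M : Matrix κ ι ℤ) (e : κ' ≃ κ) :
    (monomialHom (G := G) (M.submatrix e id)).ker = (monomialHom M).ker := by
  ext l
  simp only [mem_ker_monomialHom, submatrix_apply, id_eq, e.surjective.forall]

lemma prod_zpow_eq_prod_coe_sort_of_eq_one {l : ι → G} {P : Finset ι} [DecidableEq ι]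
    (hl : ∀ j ∈ Pᶜ, l j = 1) (m : ι → ℤ) :
    ∏ j, l j ^ m j = ∏ j : P, l j ^ m j := by
  rw [prod_coe_sort P fun j => l j ^ m j]
  exact (prod_subset (subset_univ P) fun j _ hj => by simp [hl j (mem_compl.2 hj)]).symm

end MonomialMap

section CharacterDuality

variable {ι : Type*} [Fintype ι]

lemma card_quotient_span_rows [DecidableEq ι] {M : Matrix ι ι ℤ} (hM : M.det ≠ 0) :
    Nat.card ((ι → ℤ) ⧸ Submodule.span ℤ (Set.range fun i => M i)) = M.det.natAbs := by
  have hli := linearIndependent_rows_of_det_ne_zero hM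
  rw [← Submodule.natAbs_det_basis_change (Pi.basisFun ℤ ι) _ (Module.Basis.span hli)]
  have hrows : ((↑) ∘ Module.Basis.span hli : ι → ι → ℤ) = M := by
    ext i : 1
    simp [Module.Basis.span_apply]
  rw [hrows, Pi.basisFun_det]
  rfl

def Submodule.liftQEquiv {R M N : Type*} [Ring R] [AddCommGroup M] [Module R M]
    [AddCommGroup N] [Module R N] (p : Submodule R M) :
    {f : M →ₗ[R] N // p ≤ LinearMap.ker f} ≃ (M ⧸ p →ₗ[R] N) where
  toFun f := p.liftQ f f.2
  invFun g := ⟨g ∘ₗ p.mkQ, fun x hx => by simp [(Submodule.Quotient.mk_eq_zero p).2 hx]⟩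
  left_inv f := Subtype.ext (p.liftQ_mkQ _ _)
  right_inv g := Submodule.linearMap_qext _ (p.liftQ_mkQ _ _)

lemma mem_ker_monomialHom_iff_span_le {M : Matrix ι ι ℤ} {l : ι → ℂˣ} :
    l ∈ (monomialHom M).ker ↔ Submodule.span ℤ (Set.range fun i => M i) ≤
      LinearMap.ker (Module.piEquiv ι ℤ (Additive ℂˣ) (fun j => Additive.ofMul (l j))) := by
  simp only [Submodule.span_le, Set.range_subset_iff, SetLike.mem_coe, LinearMap.mem_ker,
    Module.piEquiv_apply_apply, mem_ker_monomialHom, ← ofMul_zpow, ← ofMul_prod, ofMul_eq_zero]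

lemma card_ker_monomialHom [DecidableEq ι] {M : Matrix ι ι ℤ} (hM : M.det ≠ 0) :
    Nat.card (monomialHom (G := ℂˣ) M).ker = M.det.natAbs := by
  set L := Submodule.span ℤ (Set.range fun i => M i)
  have hL : Nat.card ((ι → ℤ) ⧸ L) = M.det.natAbs := card_quotient_span_rows hM
  have : Finite ((ι → ℤ) ⧸ L) := Nat.finite_of_card_ne_zero (by rw [hL]; simpa using hM)
  obtain ⟨dual⟩ := CommGroup.monoidHom_mulEquiv_of_hasEnoughRootsOfUnity
    (Multiplicative ((ι → ℤ) ⧸ L)) ℂ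
  rw [← hL]
  exact Nat.card_congr <|
    ((Equiv.piCongrRight fun _ => Additive.ofMul).trans
      (Module.piEquiv ι ℤ (Additive ℂˣ)).toEquiv).subtypeEquiv
      (fun _ => mem_ker_monomialHom_iff_span_le) |>.trans <|
    (Submodule.liftQEquiv L).trans <| (addMonoidHomLequivInt ℤ).symm.toEquiv.trans <|
    AddMonoidHom.toMultiplicativeLeft.trans <| dual.toEquiv.trans Multiplicative.toAdd

lemma card_ker_monomialHom_of_equiv [DecidableEq ι] {κ : Type*} (M : Matrix κ ι ℤ) (e : ι ≃ κ)
    (hM : (M.submatrix e id).det ≠ 0) :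
    Nat.card (monomialHom (G := ℂˣ) M).ker = (M.submatrix e id).det.natAbs := by
  rw [← ker_monomialHom_submatrix_equiv M e, card_ker_monomialHom hM]

end CharacterDuality

lemma associated_det_of_rows_supported {ι R : Type*} [Fintype ι] [DecidableEq ι] [CommRing R]
    {M : Matrix ι ι R} {S T : Finset ι} (hM : ∀ i ∈ S, ∀ j ∉ T, M i j = 0)
    (e₁ : T ≃ S) (e₂ : ↥Tᶜ ≃ ↥Sᶜ) :
    Associated M.det ((M.submatrix ((↑) ∘ e₁) (↑)).det * (M.submatrix ((↑) ∘ e₂) (↑)).det) := by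
  let c (s : Finset ι) : {i // i ∉ s} ≃ ↥sᶜ := Equiv.subtypeEquivRight fun _ => mem_compl.symm
  let σ : Equiv.Perm ι := Equiv.subtypeCongr e₁ ((c T).trans (e₂.trans (c S).symm))
  have hσ : ∀ j ∈ T, σ j ∈ S := by
    intro j hj
    simp [σ, Equiv.subtypeCongr, Equiv.sumCompl, hj]
  have hblock := twoBlockTriangular_det' (M.submatrix σ id) (· ∈ T)
    fun i hi j hj => hM _ (hσ i hi) j hj
  have h₁ : toSquareBlockProp (M.submatrix σ id) (· ∈ T) = M.submatrix ((↑) ∘ e₁) (↑) := by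
    ext a b
    simp [σ, toSquareBlockProp_def, Equiv.subtypeCongr, Equiv.sumCompl]
  have h₂ : toSquareBlockProp (M.submatrix σ id) (· ∉ T) =
      (M.submatrix ((↑) ∘ e₂) (↑)).submatrix (c T) (c T) := by
    ext a b
    simp [σ, c, toSquareBlockProp_def, Equiv.subtypeCongr, Equiv.sumCompl, a.2]
  rw [h₁, h₂, det_submatrix_equiv_self, det_permute] at hblock
  refine ⟨(Equiv.Perm.sign σ).map (Int.castRingHom R).toMonoidHom, ?_⟩
  rw [mul_comm]
  convert hblock using 2
  · simp
  -- the two sides differ only in the `Fintype` instance on `↥T`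
  · congr!

lemma card_ker_inf_fixedSub_compl {κ : Type*} [Fintype κ] [DecidableEq κ]
    {M : Matrix κ (Fin n) ℤ} {P : Finset (Fin n)} {Q : Finset κ}
    (hM : ∀ i ∉ Q, ∀ j ∈ P, M i j = 0) :
    Nat.card ↥((monomialHom M).ker ⊓ fixedSub Pᶜ)
      = Nat.card (monomialHom (G := ℂˣ) (M.submatrix ((↑) : Q → κ) ((↑) : P → Fin n))).ker := by
  let extend (l : P → ℂˣ) (j : Fin n) : ℂˣ := if h : j ∈ P then l ⟨j, h⟩ else 1
  have extend_fixed (l : P → ℂˣ) : extend l ∈ fixedSub Pᶜ := fun j hj => by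
    simp [extend, mem_compl.1 hj]
  refine Nat.card_congr
    { toFun := fun l => ⟨fun j => l.1 j, mem_ker_monomialHom.2 fun i => ?_⟩
      invFun := fun l => ⟨extend l, ⟨mem_ker_monomialHom.2 fun i => ?_, extend_fixed l⟩⟩
      left_inv := fun l => ?_
      right_inv := fun l => ?_ }
  · rw [← mem_ker_monomialHom.1 (Subgroup.mem_inf.1 l.2).1 i,
      prod_zpow_eq_prod_coe_sort_of_eq_one (Subgroup.mem_inf.1 l.2).2]
    rfl
  · rw [prod_zpow_eq_prod_coe_sort_of_eq_one (extend_fixed l)]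
    by_cases hi : i ∈ Q
    · simpa [extend] using mem_ker_monomialHom.1 l.2 ⟨i, hi⟩
    · exact prod_eq_one fun j _ => by simp [hM i hi j j.2]
  · ext j
    by_cases hj : j ∈ P
    · simp [extend, hj]
    · simp [extend, hj, (Subgroup.mem_inf.1 l.2).2 j (mem_compl.2 hj)]
  · ext j
    simp [extend]

lemma neg_one_pow_sub_sub_one {R : Type*} [CommRing R] {k m : ℕ} (hk : 0 < k) (hkm : k < m) :
    (-1 : R) ^ (m - k - 1) = (-1) ^ m * (-1) ^ (k - 1) := by
  obtain ⟨a, rfl⟩ : ∃ a, k = a + 1 := ⟨k - 1, by omega⟩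
  obtain ⟨b, rfl⟩ : ∃ b, m = a + b + 2 := ⟨m - a - 2, by omega⟩
  have hsq : (-1 : R) ^ a * (-1) ^ a = 1 := by
    rw [← pow_add, ← two_mul, pow_mul, neg_one_sq, one_pow]
  simp only [show a + b + 2 - (a + 1) - 1 = b by omega, add_tsub_cancel_right, pow_add]
  linear_combination -(-1 : R) ^ b * hsq

lemma symGroup_eq_ker (E : Matrix (Fin n) (Fin n) ℕ) :
    symGroup E = (monomialHom (E.map (Nat.cast : ℕ → ℤ))).ker := by
  ext l
  simp only [mem_ker_monomialHom, map_apply, zpow_natCast]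
  rfl

lemma det_map_transpose (E : Matrix (Fin n) (Fin n) ℕ) :
    (Eᵀ.map (Nat.cast : ℕ → ℤ)).det = (E.map (Nat.cast : ℕ → ℤ)).det := by
  rw [transpose_map, det_transpose]

lemma mem_rowSet {E : Matrix (Fin n) (Fin n) ℕ} {I : Finset (Fin n)} {i : Fin n} :
    i ∈ rowSet E I ↔ ∀ j ∉ I, E i j = 0 := by
  simp [rowSet]

noncomputable def properGoodSets (E : Matrix (Fin n) (Fin n) ℕ) : Finset (Finset (Fin n)) :=
  univ.filter fun I => (rowSet E I).card = I.card ∧ 0 < I.card ∧ I.card < n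

lemma mem_properGoodSets {E : Matrix (Fin n) (Fin n) ℕ} {I : Finset (Fin n)} :
    I ∈ properGoodSets E ↔ (rowSet E I).card = I.card ∧ 0 < I.card ∧ I.card < n := by
  simp [properGoodSets]

section GoodSet

variable {E : Matrix (Fin n) (Fin n) ℕ} {I : Finset (Fin n)}

lemma natAbs_det_eq_mul_blocks (e₁ : I ≃ rowSet E I) (e₂ : ↥Iᶜ ≃ ↥(rowSet E I)ᶜ) :
    (E.map (Nat.cast : ℕ → ℤ)).det.natAbs =
      ((E.map (Nat.cast : ℕ → ℤ)).submatrix ((↑) ∘ e₁) (↑)).det.natAbs *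
      ((E.map (Nat.cast : ℕ → ℤ)).submatrix ((↑) ∘ e₂) (↑)).det.natAbs := by
  rw [← Int.natAbs_mul, Int.natAbs_eq_iff_associated]
  exact associated_det_of_rows_supported (fun i hi j hj => by simp [mem_rowSet.1 hi j hj]) e₁ e₂

/-- A column `k ∈ I` vanishing on all rows of `A(I)` would make the block `E[A(I), I]` singular. -/
lemma rowSet_transpose_compl_rowSet (hdet : (E.map (Nat.cast : ℕ → ℤ)).det ≠ 0)
    (hI : (rowSet E I).card = I.card) :
    rowSet Eᵀ (rowSet E I)ᶜ = Iᶜ := by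
  have e₁ : I ≃ rowSet E I := Fintype.equivOfCardEq (by simp [hI])
  have e₂ : ↥Iᶜ ≃ ↥(rowSet E I)ᶜ := Fintype.equivOfCardEq (by simp [hI])
  ext k
  rw [mem_rowSet, mem_compl]
  simp only [mem_compl, not_not, transpose_apply]
  refine ⟨fun hk hkI => hdet ?_, fun hkI i hi => mem_rowSet.1 hi k hkI⟩
  have hcol : ((E.map (Nat.cast : ℕ → ℤ)).submatrix ((↑) ∘ e₁) (↑)).det = 0 :=
    det_eq_zero_of_column_eq_zero ⟨k, hkI⟩ fun r => by simp [hk _ (e₁ r).2]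
  simpa [hcol] using natAbs_det_eq_mul_blocks e₁ e₂

lemma card_isotropy_mul_card_isotropy_transpose (hdet : (E.map (Nat.cast : ℕ → ℤ)).det ≠ 0)
    (hI : (rowSet E I).card = I.card) :
    Nat.card (isotropy E I) * Nat.card (isotropy Eᵀ (rowSet E I)ᶜ) =
      (E.map (Nat.cast : ℕ → ℤ)).det.natAbs := by
  have e₁ : I ≃ rowSet E I := Fintype.equivOfCardEq (by simp [hI])
  have e₂ : ↥Iᶜ ≃ ↥(rowSet E I)ᶜ := Fintype.equivOfCardEq (by simp [hI])
  have hfac := natAbs_det_eq_mul_blocks e₁ e₂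
  have hne := hfac ▸ Int.natAbs_ne_zero.2 hdet
  have hE := card_ker_inf_fixedSub_compl (M := E.map (Nat.cast : ℕ → ℤ)) (P := Iᶜ)
    (Q := (rowSet E I)ᶜ)
      fun i hi j hj => by simp [mem_rowSet.1 (by simpa using hi) j (mem_compl.1 hj)]
  rw [compl_compl] at hE
  have hEt := card_ker_inf_fixedSub_compl (M := (E.map (Nat.cast : ℕ → ℤ))ᵀ) (P := rowSet E I)
    (Q := I) fun j hj i hi => by simp [mem_rowSet.1 hi j hj]
  have hblock : ((E.map (Nat.cast : ℕ → ℤ))ᵀ.submatrix ((↑) : I → Fin n)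
      ((↑) : rowSet E I → Fin n)).submatrix e₁.symm id
      = (((E.map (Nat.cast : ℕ → ℤ)).submatrix ((↑) ∘ e₁) (↑)).submatrix e₁.symm e₁.symm)ᵀ := by
    ext; simp
  have hdet₁₁ : (((E.map (Nat.cast : ℕ → ℤ))ᵀ.submatrix ((↑) : I → Fin n)
      ((↑) : rowSet E I → Fin n)).submatrix e₁.symm id).det ≠ 0 := by
    rw [hblock, det_transpose, det_submatrix_equiv_self]
    exact Int.natAbs_ne_zero.1 (left_ne_zero_of_mul hne)
  rw [isotropy, symGroup_eq_ker, hE, card_ker_monomialHom_of_equiv _ e₂ (by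
      rw [submatrix_submatrix, Function.comp_id]
      exact Int.natAbs_ne_zero.1 (right_ne_zero_of_mul hne)),
    isotropy, symGroup_eq_ker, transpose_map, hEt, card_ker_monomialHom_of_equiv _ e₁.symm hdet₁₁,
    hblock, det_transpose, det_submatrix_equiv_self, hfac, mul_comm, submatrix_submatrix,
    Function.comp_id]

lemma compl_rowSet_mem_properGoodSets_transpose (hdet : (E.map (Nat.cast : ℕ → ℤ)).det ≠ 0)
    (hI : I ∈ properGoodSets E) : (rowSet E I)ᶜ ∈ properGoodSets Eᵀ := by
  obtain ⟨hgood, hpos, hlt⟩ := mem_properGoodSets.1 hI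
  rw [mem_properGoodSets, rowSet_transpose_compl_rowSet hdet hgood, card_compl, card_compl, hgood,
    Fintype.card_fin]
  omega

lemma neg_one_pow_mul_div_card_isotropy_transpose (hdet : (E.map (Nat.cast : ℕ → ℤ)).det ≠ 0)
    (hI : I ∈ properGoodSets E) :
    (-1 : ℚ) ^ ((rowSet E I)ᶜ.card - 1) * ((E.map (Nat.cast : ℕ → ℤ)).det.natAbs : ℚ) /
        (Nat.card (isotropy Eᵀ (rowSet E I)ᶜ) : ℚ)
      = (-1 : ℚ) ^ n * ((-1 : ℚ) ^ (I.card - 1) * (Nat.card (isotropy E I) : ℚ)) := by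
  obtain ⟨hgood, hpos, hlt⟩ := mem_properGoodSets.1 hI
  have hprod := card_isotropy_mul_card_isotropy_transpose hdet hgood
  have hne : (Nat.card (isotropy Eᵀ (rowSet E I)ᶜ) : ℚ) ≠ 0 :=
    Nat.cast_ne_zero.2 (right_ne_zero_of_mul (hprod ▸ Int.natAbs_ne_zero.2 hdet))
  rw [card_compl, hgood, Fintype.card_fin, neg_one_pow_sub_sub_one hpos hlt, ← hprod]
  push_cast
  field_simp

end GoodSet

lemma sum_properGoodSets_transpose {E : Matrix (Fin n) (Fin n) ℕ} {β : Type*} [AddCommMonoid β]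
    (hdet : (E.map (Nat.cast : ℕ → ℤ)).det ≠ 0) (f : Finset (Fin n) → β) :
    ∑ J ∈ properGoodSets Eᵀ, f J = ∑ I ∈ properGoodSets E, f (rowSet E I)ᶜ := by
  have hdetT : (Eᵀ.map (Nat.cast : ℕ → ℤ)).det ≠ 0 := by rwa [det_map_transpose]
  have hdual : ∀ J ∈ properGoodSets Eᵀ, (rowSet E (rowSet Eᵀ J)ᶜ)ᶜ = J := fun J hJ => by
    simpa using
      congrArg Compl.compl (rowSet_transpose_compl_rowSet hdetT (mem_properGoodSets.1 hJ).1)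
  refine sum_nbij' (fun J => (rowSet Eᵀ J)ᶜ) (fun I => (rowSet E I)ᶜ)
    (fun J hJ => by simpa using compl_rowSet_mem_properGoodSets_transpose hdetT hJ)
    (fun I hI => compl_rowSet_mem_properGoodSets_transpose hdet hI) hdual
    (fun I hI => ?_) (fun J hJ => by rw [hdual J hJ])
  rw [rowSet_transpose_compl_rowSet hdet (mem_properGoodSets.1 hI).1, compl_compl]

open Matrix in
/-- The combinatorial form of the main duality theorem in the extreme case `G = G_f`,
`G̃ = {1}`: with `d = |det E|`, one has
`∑_{J good for E^T, 0<|J|<n} (−1)^{|J|−1} d / |G_{E^T}^J| + (−1)^{n−1} d − 1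
 = (−1)^n (∑_{I good for E, 0<|I|<n} (−1)^{|I|−1} |G_E^I| + (−1)^{n−1} − d)`. -/
theorem euler_duality_extreme (E : Matrix (Fin n) (Fin n) ℕ)
    (hdet : (E.map (Nat.cast : ℕ → ℤ)).det ≠ 0) :
    (∑ J ∈ Finset.univ.filter
        (fun J : Finset (Fin n) => (rowSet Eᵀ J).card = J.card ∧ 0 < J.card ∧ J.card < n),
      (-1 : ℚ) ^ (J.card - 1) * ((E.map (Nat.cast : ℕ → ℤ)).det.natAbs : ℚ) /
        (Nat.card (isotropy Eᵀ J) : ℚ))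
      + (-1 : ℚ) ^ (n - 1) * ((E.map (Nat.cast : ℕ → ℤ)).det.natAbs : ℚ) - 1
    = (-1 : ℚ) ^ n *
      ((∑ I ∈ Finset.univ.filter
          (fun I : Finset (Fin n) => (rowSet E I).card = I.card ∧ 0 < I.card ∧ I.card < n),
        (-1 : ℚ) ^ (I.card - 1) * (Nat.card (isotropy E I) : ℚ))
        + (-1 : ℚ) ^ (n - 1) - ((E.map (Nat.cast : ℕ → ℤ)).det.natAbs : ℚ)) := by
  obtain rfl | hn := Nat.eq_zero_or_pos n
  · simp
  change (∑ J ∈ properGoodSets Eᵀ, _) + _ - _ = _ * ((∑ I ∈ properGoodSets E, _) + _ - _)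
  rw [sum_properGoodSets_transpose hdet,
    sum_congr rfl fun I hI => neg_one_pow_mul_div_card_isotropy_transpose hdet hI, ← mul_sum]
  obtain ⟨m, rfl⟩ := Nat.exists_eq_add_one_of_ne_zero hn.ne'
  have hsq : ((-1 : ℚ) ^ m) ^ 2 = 1 := by rw [← pow_mul, pow_mul', neg_one_sq, one_pow]
  simp only [pow_succ, add_tsub_cancel_right]
  linear_combination hsq
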